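/- arXiv:1205.5148 — 2 statements merged into one kernel-verified Lean document; each statement's English description precedes it below -/
import Mathlib

section
/- Let F_q be a finite field, E a field extension of F_q of degree m, ρ : E → Mat_{m×m}(F_q) the regular representation (a ↦ matrix of multiplication by a), n₁n₂ = n, and Φ₂ : E^n → (n₁m × n₂m matrices over F_q) the induced two-dimensional expansion. Let 0 < k < n and ℓ ≥ 1, assume ⌊√(⌊(n−k)/(2ℓ)⌋)⌋ ≥ 1, and let C ⊆ E^n have minimum Hamming distance at least n−k+1. Set x = m·(⌊√(⌊(n−k)/(2ℓ)⌋)⌋ − 1) + 1. Then Φ₂(C) corrects any ℓ square bursts of side at most x each: for all c, c′ ∈ C and all e, e′ whose supports are each covered by a union of ℓ squares of side x with contiguous rows and columns, Φ₂(c) + e = Φ₂(c′) + e′ implies c = c′. -/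
/-!
Let `s = ⌊√⌊(n - k) / (2ℓ)⌋⌋`. If `Φ₂ c + e = Φ₂ c' + e'`, then `Φ₂ c - Φ₂ c' = e' - e` is
supported in `2ℓ` squares of side `m (s - 1) + 1`, each of which meets at most `s × s` of the
`m × m` blocks. Since `ρ` is injective, every coordinate where `c` and `c'` differ yields a nonzero
block, so `c` and `c'` differ in at most `2ℓ s² ≤ n - k` coordinates, which is
below the minimum distance of `C`.
-/

/-- The linear (row-major) index of position `j` in the `i`-th block of length `m`. -/
def finIdx {n m : ℕ} (i : Fin n) (j : Fin m) : Fin (n * m) :=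
  ⟨i.1 * m + j.1, by
    have h1 : i.1 + 1 ≤ n := i.2
    have h2 : j.1 < m := j.2
    calc i.1 * m + j.1 < (i.1 + 1) * m := by nlinarith
      _ ≤ n * m := Nat.mul_le_mul_right m h1⟩

/-- `ℓ` square bursts of side (at most) `x` each: a matrix whose support is covered
by a union of `ℓ` squares of side `x` with contiguous rows and columns. -/
def IsSquareBurstUnion {F : Type*} [Zero F] {R C : ℕ} (ℓ x : ℕ)
    (e : Matrix (Fin R) (Fin C) F) : Prop :=
  ∃ p q : Fin ℓ → ℕ, ∀ i j, e i j ≠ 0 → ∃ t : Fin ℓ,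
    p t ≤ (i : ℕ) ∧ (i : ℕ) < p t + x ∧ q t ≤ (j : ℕ) ∧ (j : ℕ) < q t + x

open Function

def blockSupport {F : Type*} [Zero F] {m n₁ n₂ : ℕ} (M : Matrix (Fin (n₁ * m)) (Fin (n₂ * m)) F) :
    Set (Fin n₁ × Fin n₂) :=
  {rc | ∃ u v, M (finIdx rc.1 u) (finIdx rc.2 v) ≠ 0}

theorem finIdx_eq_finProdFinEquiv {n m : ℕ} (i : Fin n) (j : Fin m) :
    finIdx i j = finProdFinEquiv (i, j) := by
  ext
  simp only [finIdx, finProdFinEquiv_apply_val]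
  ring

theorem finIdx_surjective {n m : ℕ} : Surjective fun ij : Fin n × Fin m => finIdx ij.1 ij.2 := by
  simpa only [finIdx_eq_finProdFinEquiv] using finProdFinEquiv.surjective

/-- A window of `m (s - 1) + 1` consecutive integers meets at most `s` blocks of length `m`. -/
theorem exists_block_offset_lt {m s p r u : ℕ} (hs : 1 ≤ s) (hu : u < m)
    (hp : p ≤ r * m + u) (hps : r * m + u < p + (m * (s - 1) + 1)) :
    ∃ a < s, r = p / m + a := by
  have hdiv := Nat.div_add_mod p m
  have hmod := Nat.mod_lt p (by omega : 0 < m)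
  have hlo : p / m < r + 1 :=
    Nat.lt_of_mul_lt_mul_left (a := m) (by rw [mul_add, mul_comm m r]; omega)
  have hhi : r < p / m + s :=
    Nat.lt_of_mul_lt_mul_left (a := m) (by
      rw [mul_add, mul_comm m r]
      obtain ⟨s', rfl⟩ : ∃ s', s = s' + 1 := ⟨s - 1, by omega⟩
      rw [Nat.add_sub_cancel] at hps
      rw [mul_add, mul_one]
      omega)
  exact ⟨r - p / m, by omega, by omega⟩

section blockSupport

variable {F : Type*} {m n₁ n₂ : ℕ}

theorem ncard_blockSupport_le [Zero F] {ℓ s : ℕ} (hs : 1 ≤ s)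
    {M : Matrix (Fin (n₁ * m)) (Fin (n₂ * m)) F}
    (hM : IsSquareBurstUnion ℓ (m * (s - 1) + 1) M) :
    (blockSupport M).ncard ≤ ℓ * (s * s) := by
  obtain ⟨p, q, hpq⟩ := hM
  let corner : Fin ℓ × Fin s × Fin s → ℕ × ℕ := fun tab =>
    (p tab.1 / m + tab.2.1, q tab.1 / m + tab.2.2)
  have hsub : Prod.map Fin.val Fin.val '' blockSupport M ⊆ Set.range corner := by
    rintro _ ⟨⟨r, c⟩, ⟨u, v, huv⟩, rfl⟩
    obtain ⟨t, hr, hr', hc, hc'⟩ := hpq _ _ huv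
    obtain ⟨a, ha, hra⟩ := exists_block_offset_lt hs u.2 hr hr'
    obtain ⟨b, hb, hcb⟩ := exists_block_offset_lt hs v.2 hc hc'
    exact ⟨(t, ⟨a, ha⟩, ⟨b, hb⟩), Prod.ext hra.symm hcb.symm⟩
  calc (blockSupport M).ncard = (Prod.map Fin.val Fin.val '' blockSupport M).ncard :=
        (Set.ncard_image_of_injective _ (Fin.val_injective.prodMap Fin.val_injective)).symm
    _ ≤ (Set.range corner).ncard := Set.ncard_le_ncard hsub
    _ ≤ Nat.card (Fin ℓ × Fin s × Fin s) := by
        rw [← Set.image_univ, ← Set.ncard_univ]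
        exact Set.ncard_image_le
    _ = ℓ * (s * s) := by simp

theorem blockSupport_sub_subset [AddGroup F] (M N : Matrix (Fin (n₁ * m)) (Fin (n₂ * m)) F) :
    blockSupport (M - N) ⊆ blockSupport M ∪ blockSupport N := by
  rintro rc ⟨u, v, huv⟩
  by_contra hrc
  simp only [Set.mem_union, blockSupport, Set.mem_ofPred_eq, not_or, not_exists, not_not] at hrc
  exact huv (by simp [hrc.1, hrc.2])

theorem hammingDist_le_ncard_blockSupport_sub {E : Type*} [DecidableEq E] [AddGroup F] {n : ℕ}
    {ρ : E → Matrix (Fin m) (Fin m) F} (hρ : Injective ρ) (hn : n₁ * n₂ = n)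
    {Φ : (Fin n → E) → Matrix (Fin (n₁ * m)) (Fin (n₂ * m)) F}
    (hΦ : ∀ (x : Fin n → E) (r : Fin n₁) (c : Fin n₂) (u v : Fin m),
      Φ x (finIdx r u) (finIdx c v) = ρ (x (Fin.cast hn (finIdx r c))) u v)
    (x y : Fin n → E) :
    hammingDist x y ≤ (blockSupport (Φ x - Φ y)).ncard := by
  let pos : Fin n₁ × Fin n₂ → Fin n := fun rc => Fin.cast hn (finIdx rc.1 rc.2)
  have hsub : {i | x i ≠ y i} ⊆ pos '' blockSupport (Φ x - Φ y) := by
    intro i hi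
    obtain ⟨rc, rfl⟩ : ∃ rc, pos rc = i := by
      obtain ⟨rc, hrc⟩ := finIdx_surjective (Fin.cast hn.symm i)
      exact ⟨rc, by simp [pos, hrc]⟩
    obtain ⟨u, v, huv⟩ : ∃ u v, ρ (x (pos rc)) u v ≠ ρ (y (pos rc)) u v := by
      simpa [← Matrix.ext_iff] using hρ.ne hi
    exact ⟨rc, ⟨u, v, by simpa [hΦ, sub_eq_zero] using huv⟩, rfl⟩
  calc hammingDist x y = {i | x i ≠ y i}.ncard := by
        rw [hammingDist, ← Set.ncard_coe_finset]
        simp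
    _ ≤ (pos '' blockSupport (Φ x - Φ y)).ncard := Set.ncard_le_ncard hsub
    _ ≤ (blockSupport (Φ x - Φ y)).ncard := Set.ncard_image_le

end blockSupport

theorem regular_expansion_corrects_multiple_square_bursts_general
    {F E : Type*} [Field F]
    [Field E] [Algebra F E] [DecidableEq E]
    (m n n₁ n₂ k ℓ : ℕ) (b : Module.Basis (Fin m) F E)
    (ρ : E → Matrix (Fin m) (Fin m) F)
    (hρ : ρ = fun a => LinearMap.toMatrix b b (LinearMap.mulLeft F a))
    (hn : n₁ * n₂ = n)
    (Φ₂ : (Fin n → E) → Matrix (Fin (n₁ * m)) (Fin (n₂ * m)) F)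
    (hΦ : ∀ (x : Fin n → E) (r : Fin n₁) (c : Fin n₂) (u v : Fin m),
      Φ₂ x (finIdx r u) (finIdx c v) = ρ (x (Fin.cast hn (finIdx r c))) u v)
    (hsq : 1 ≤ Nat.sqrt ((n - k) / (2 * ℓ)))
    (C : Set (Fin n → E))
    (hC : ∀ c ∈ C, ∀ c' ∈ C, c ≠ c' → n - k + 1 ≤ hammingDist c c') :
    ∀ c ∈ C, ∀ c' ∈ C, ∀ e e' : Matrix (Fin (n₁ * m)) (Fin (n₂ * m)) F,
      IsSquareBurstUnion ℓ (m * (Nat.sqrt ((n - k) / (2 * ℓ)) - 1) + 1) e →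
      IsSquareBurstUnion ℓ (m * (Nat.sqrt ((n - k) / (2 * ℓ)) - 1) + 1) e' →
      Φ₂ c + e = Φ₂ c' + e' → c = c' := by
  intro c hc c' hc' e e' he he' heq
  set s := Nat.sqrt ((n - k) / (2 * ℓ))
  have hρinj : Injective ρ := hρ ▸ Algebra.leftMulMatrix_injective b
  have hdiff : Φ₂ c - Φ₂ c' = e' - e := by
    rw [sub_eq_sub_iff_add_eq_add, heq, add_comm]
  have hdist : hammingDist c c' ≤ 2 * ℓ * (s * s) :=
    calc hammingDist c c' ≤ (blockSupport (Φ₂ c - Φ₂ c')).ncard :=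
          hammingDist_le_ncard_blockSupport_sub hρinj hn hΦ c c'
      _ ≤ (blockSupport e').ncard + (blockSupport e).ncard := by
          rw [hdiff]
          exact (Set.ncard_le_ncard (blockSupport_sub_subset e' e)).trans (Set.ncard_union_le _ _)
      _ ≤ ℓ * (s * s) + ℓ * (s * s) :=
          add_le_add (ncard_blockSupport_le hsq he') (ncard_blockSupport_le hsq he)
      _ = 2 * ℓ * (s * s) := by ring
  have hbound : 2 * ℓ * (s * s) ≤ n - k :=
    (Nat.mul_le_mul_left _ (Nat.sqrt_le _)).trans (Nat.mul_div_le _ _)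
  by_contra hne
  have := hC c hc c' hc' hne
  omega

/-- The two-dimensional expansion via the regular representation
`ρ : E → Mat_{m×m}(F)` of a code `C ⊆ E^n` of minimum distance at least `n - k + 1`
corrects any `ℓ` square bursts of side at most `x = m(⌊√⌊(n-k)/(2ℓ)⌋⌋ - 1) + 1` each. -/
theorem regular_expansion_corrects_multiple_square_bursts
    {F E : Type*} [Field F] [Fintype F] [DecidableEq F]
    [Field E] [Algebra F E] [DecidableEq E]
    (m n n₁ n₂ k ℓ : ℕ) (b : Module.Basis (Fin m) F E)
    (ρ : E → Matrix (Fin m) (Fin m) F)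
    (hρ : ρ = fun a => LinearMap.toMatrix b b (LinearMap.mulLeft F a))
    (hn₁ : 0 < n₁) (hn₂ : 0 < n₂) (hn : n₁ * n₂ = n)
    (Φ₂ : (Fin n → E) → Matrix (Fin (n₁ * m)) (Fin (n₂ * m)) F)
    (hΦ : ∀ (x : Fin n → E) (r : Fin n₁) (c : Fin n₂) (u v : Fin m),
      Φ₂ x (finIdx r u) (finIdx c v) = ρ (x (Fin.cast hn (finIdx r c))) u v)
    (hk : 0 < k) (hkn : k < n) (hℓ : 1 ≤ ℓ)
    (hsq : 1 ≤ Nat.sqrt ((n - k) / (2 * ℓ)))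
    (C : Set (Fin n → E))
    (hC : ∀ c ∈ C, ∀ c' ∈ C, c ≠ c' → n - k + 1 ≤ hammingDist c c') :
    ∀ c ∈ C, ∀ c' ∈ C, ∀ e e' : Matrix (Fin (n₁ * m)) (Fin (n₂ * m)) F,
      IsSquareBurstUnion ℓ (m * (Nat.sqrt ((n - k) / (2 * ℓ)) - 1) + 1) e →
      IsSquareBurstUnion ℓ (m * (Nat.sqrt ((n - k) / (2 * ℓ)) - 1) + 1) e' →
      Φ₂ c + e = Φ₂ c' + e' → c = c' :=
  regular_expansion_corrects_multiple_square_bursts_general m n n₁ n₂ k ℓ b ρ hρ hn Φ₂ hΦ hsq C hC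
end

section
/- Let F_q be a finite field, E a field extension of F_q of degree m, ρ : E → Mat_{m×m}(F_q) the regular representation (a ↦ matrix of multiplication by a), n₁n₂ = n, and Φ₂ : E^n → (n₁m × n₂m matrices over F_q) the induced two-dimensional expansion. Let 0 < k < n and ℓ ≥ 1, set t = ⌊(n−k)/(2ℓ)⌋ and assume t ≥ 1, and let C ⊆ E^n have minimum Hamming distance at least n−k+1. Then Φ₂(C) corrects any ℓ one-dimensional bursts of length at most m(t−1)+1 each: for all c, c′ ∈ C and all e, e′ whose supports are each covered by a union of ℓ sets, each lying in a single row within m(t−1)+1 contiguous columns or in a single column within m(t−1)+1 contiguous rows, Φ₂(c) + e = Φ₂(c′) + e′ implies c = c′. -/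
/-- `ℓ` one-dimensional bursts of length (at most) `L` each: the support of the
matrix is covered by a union of `ℓ` sets, each lying in a single row within `L`
contiguous columns (when `dir t = true`) or in a single column within `L`
contiguous rows (when `dir t = false`). -/
def IsLineBurstUnion {F : Type*} [Zero F] {R C : ℕ} (ℓ L : ℕ)
    (e : Matrix (Fin R) (Fin C) F) : Prop :=
  ∃ (dir : Fin ℓ → Bool) (r p : Fin ℓ → ℕ), ∀ i j, e i j ≠ 0 → ∃ t : Fin ℓ,
    cond (dir t)
      ((i : ℕ) = r t ∧ p t ≤ (j : ℕ) ∧ (j : ℕ) < p t + L)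
      ((j : ℕ) = r t ∧ p t ≤ (i : ℕ) ∧ (i : ℕ) < p t + L)

theorem finIdx_val_div {n m : ℕ} (i : Fin n) (j : Fin m) : (finIdx i j : ℕ) / m = i :=
  Nat.div_eq_of_lt_le (Nat.le_add_right _ _) (by simp only [finIdx, Nat.succ_mul]; omega)

theorem finIdx_val_mod {n m : ℕ} (i : Fin n) (j : Fin m) : (finIdx i j : ℕ) % m = j := by
  simp [finIdx, Nat.mod_eq_of_lt j.2]

theorem finIdx_surjective_s14 {n m : ℕ} (k : Fin (n * m)) : ∃ i j, finIdx i j = k :=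
  ⟨k.divNat, k.modNat, Fin.ext <| by
    simp only [finIdx, Fin.coe_divNat, Fin.coe_modNat]; exact Nat.div_add_mod' _ _⟩

theorem exists_fin_div_eq_add {m t p x : ℕ} (ht : 1 ≤ t) (hpx : p ≤ x)
    (hx : x < p + (m * (t - 1) + 1)) : ∃ q : Fin t, x / m = p / m + q := by
  have hlt : x / m < p / m + t := by
    rcases Nat.eq_zero_or_pos m with rfl | hm
    · simp only [Nat.div_zero, zero_add]; omega
    calc x / m ≤ (p + (t - 1) * m) / m := Nat.div_le_div_right (by rw [mul_comm]; omega)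
      _ = p / m + (t - 1) := Nat.add_mul_div_right _ _ hm
      _ < p / m + t := by omega
  have hle : p / m ≤ x / m := Nat.div_le_div_right hpx
  exact ⟨⟨x / m - p / m, by omega⟩, by simp only; omega⟩

theorem IsLineBurstUnion.exists_block_cover {F : Type*} [Zero F] {R C ℓ m t : ℕ}
    {e : Matrix (Fin R) (Fin C) F} (he : IsLineBurstUnion ℓ (m * (t - 1) + 1) e)
    (ht : 1 ≤ t) :
    ∃ S : Finset (ℕ × ℕ), S.card ≤ ℓ * t ∧
      ∀ i j, e i j ≠ 0 → ((i : ℕ) / m, (j : ℕ) / m) ∈ S := by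
  obtain ⟨dir, r, p, hcover⟩ := he
  let block : Fin ℓ × Fin t → ℕ × ℕ := fun ⟨s, q⟩ =>
    cond (dir s) (r s / m, p s / m + q) (p s / m + q, r s / m)
  refine ⟨Finset.univ.image block, Finset.card_image_le.trans (by simp), fun i j hij => ?_⟩
  obtain ⟨s, hs⟩ := hcover i j hij
  simp only [Finset.mem_image, Finset.mem_univ, true_and, Prod.exists]
  cases hdir : dir s <;> simp only [hdir, cond_true, cond_false] at hs
  · obtain ⟨hj, hp, hlt⟩ := hs
    obtain ⟨q, hq⟩ := exists_fin_div_eq_add ht hp hlt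
    exact ⟨s, q, by simp [block, hdir, hj, hq]⟩
  · obtain ⟨hi, hp, hlt⟩ := hs
    obtain ⟨q, hq⟩ := exists_fin_div_eq_add ht hp hlt
    exact ⟨s, q, by simp [block, hdir, hi, hq]⟩

theorem hammingDist_le_card_of_blocks {β : Type*} [DecidableEq β] {n₁ n₂ n : ℕ}
    (hn : n₁ * n₂ = n) {x y : Fin n → β} (S : Finset (ℕ × ℕ))
    (hS : ∀ r s, x (Fin.cast hn (finIdx r s)) ≠ y (Fin.cast hn (finIdx r s)) →
      ((r : ℕ), (s : ℕ)) ∈ S) :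
    hammingDist x y ≤ S.card := by
  refine Finset.card_le_card_of_injOn (fun j => ((j : ℕ) / n₂, (j : ℕ) % n₂)) ?_ ?_
  · intro j hj
    obtain ⟨r, s, hrs⟩ := finIdx_surjective_s14 (Fin.cast hn.symm j)
    obtain rfl : Fin.cast hn (finIdx r s) = j := by simp [hrs]
    simpa [finIdx_val_div, finIdx_val_mod] using hS r s (by simpa using hj)
  · intro j _ j' _ h
    simp only [Prod.mk.injEq] at h
    exact Fin.ext (by rw [← Nat.div_add_mod j n₂, ← Nat.div_add_mod j' n₂, h.1, h.2])

theorem regular_expansion_corrects_multiple_line_bursts_general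
    {F E : Type*} [Field F]
    [Field E] [Algebra F E] [DecidableEq E]
    (m n n₁ n₂ k ℓ t : ℕ) (b : Module.Basis (Fin m) F E)
    (ρ : E → Matrix (Fin m) (Fin m) F)
    (hρ : ρ = fun a => LinearMap.toMatrix b b (LinearMap.mulLeft F a))
    (hn : n₁ * n₂ = n)
    (Φ₂ : (Fin n → E) → Matrix (Fin (n₁ * m)) (Fin (n₂ * m)) F)
    (hΦ : ∀ (x : Fin n → E) (r : Fin n₁) (c : Fin n₂) (u v : Fin m),
      Φ₂ x (finIdx r u) (finIdx c v) = ρ (x (Fin.cast hn (finIdx r c))) u v)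
    (ht : t = (n - k) / (2 * ℓ)) (ht1 : 1 ≤ t)
    (C : Set (Fin n → E))
    (hC : ∀ c ∈ C, ∀ c' ∈ C, c ≠ c' → n - k + 1 ≤ hammingDist c c') :
    ∀ c ∈ C, ∀ c' ∈ C, ∀ e e' : Matrix (Fin (n₁ * m)) (Fin (n₂ * m)) F,
      IsLineBurstUnion ℓ (m * (t - 1) + 1) e → IsLineBurstUnion ℓ (m * (t - 1) + 1) e' →
      Φ₂ c + e = Φ₂ c' + e' → c = c' := by
  intro c hc c' hc' e e' he he' heq
  by_contra hne
  have hρ_inj : Function.Injective ρ := hρ ▸ Algebra.leftMulMatrix_injective b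
  obtain ⟨S, hS, hSe⟩ := he.exists_block_cover ht1
  obtain ⟨S', hS', hSe'⟩ := he'.exists_block_cover ht1
  have hblock : ∀ r s, c (Fin.cast hn (finIdx r s)) ≠ c' (Fin.cast hn (finIdx r s)) →
      ((r : ℕ), (s : ℕ)) ∈ S ∪ S' := by
    intro r s hrs
    obtain ⟨u, v, huv⟩ :
        ∃ u v, Φ₂ c (finIdx r u) (finIdx s v) ≠ Φ₂ c' (finIdx r u) (finIdx s v) := by
      by_contra! h
      exact hrs (hρ_inj (Matrix.ext fun u v => by simpa [hΦ] using h u v))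
    have hee' : e (finIdx r u) (finIdx s v) ≠ e' (finIdx r u) (finIdx s v) := fun h =>
      huv (by simpa [h] using congrFun (congrFun heq (finIdx r u)) (finIdx s v))
    rw [Finset.mem_union, ← finIdx_val_div r u, ← finIdx_val_div s v]
    by_cases h0 : e (finIdx r u) (finIdx s v) = 0
    · exact Or.inr (hSe' _ _ (h0 ▸ hee'.symm))
    · exact Or.inl (hSe _ _ h0)
  have h2ℓt : 2 * (ℓ * t) ≤ n - k := by
    rw [ht, ← mul_assoc, mul_comm]; exact Nat.div_mul_le_self (n - k) (2 * ℓ)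
  have : n - k + 1 ≤ n - k := calc
    n - k + 1 ≤ hammingDist c c' := hC c hc c' hc' hne
    _ ≤ (S ∪ S').card := hammingDist_le_card_of_blocks hn _ hblock
    _ ≤ S.card + S'.card := Finset.card_union_le S S'
    _ ≤ n - k := by omega
  omega

/-- The two-dimensional expansion via the regular representation
`ρ : E → Mat_{m×m}(F)` of a code `C ⊆ E^n` of minimum distance at least `n - k + 1`
corrects any `ℓ` one-dimensional bursts of length at most `m(t-1)+1` each, where
`t = ⌊(n-k)/(2ℓ)⌋ ≥ 1`. -/
theorem regular_expansion_corrects_multiple_line_bursts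
    {F E : Type*} [Field F] [Fintype F] [DecidableEq F]
    [Field E] [Algebra F E] [DecidableEq E]
    (m n n₁ n₂ k ℓ t : ℕ) (b : Module.Basis (Fin m) F E)
    (ρ : E → Matrix (Fin m) (Fin m) F)
    (hρ : ρ = fun a => LinearMap.toMatrix b b (LinearMap.mulLeft F a))
    (hn₁ : 0 < n₁) (hn₂ : 0 < n₂) (hn : n₁ * n₂ = n)
    (Φ₂ : (Fin n → E) → Matrix (Fin (n₁ * m)) (Fin (n₂ * m)) F)
    (hΦ : ∀ (x : Fin n → E) (r : Fin n₁) (c : Fin n₂) (u v : Fin m),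
      Φ₂ x (finIdx r u) (finIdx c v) = ρ (x (Fin.cast hn (finIdx r c))) u v)
    (hk : 0 < k) (hkn : k < n) (hℓ : 1 ≤ ℓ) (ht : t = (n - k) / (2 * ℓ)) (ht1 : 1 ≤ t)
    (C : Set (Fin n → E))
    (hC : ∀ c ∈ C, ∀ c' ∈ C, c ≠ c' → n - k + 1 ≤ hammingDist c c') :
    ∀ c ∈ C, ∀ c' ∈ C, ∀ e e' : Matrix (Fin (n₁ * m)) (Fin (n₂ * m)) F,
      IsLineBurstUnion ℓ (m * (t - 1) + 1) e → IsLineBurstUnion ℓ (m * (t - 1) + 1) e' →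
      Φ₂ c + e = Φ₂ c' + e' → c = c' :=
  regular_expansion_corrects_multiple_line_bursts_general m n n₁ n₂ k ℓ t b ρ hρ hn Φ₂ hΦ ht ht1 C
    hC
end
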